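/- Soft-thresholding of singular values solves the nuclear-norm proximal problem: for any matrix T ∈ ℝ^{n×D} and c > 0, the matrix 𝒯_c(T) = U·diag((σ_i − c)_+)·Vᵀ (where T = U·diag(σ_i)·Vᵀ is the SVD) is the unique minimizer of (1/2)‖M − T‖_F² + c‖M‖_* over M ∈ ℝ^{n×D}. -/

import Mathlib

/-
Write `T = X + Z` with `X = U diag((σ - c)₊) Vᵀ` and `Z = U diag(min σ c) Vᵀ`. Then `‖Z‖_op ≤ c`
and `⟨X, Z⟩ = c ‖X‖_*`, so `Z / c` is a subgradient of the nuclear norm at `X`. Combined with the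
duality `⟨M, Z⟩ ≤ ‖Z‖_op ‖M‖_*`, obtained by evaluating the trace in an eigenbasis of `MᵀM`,
expanding the square gives `F(X) + ½ ‖M - X‖_F² ≤ F(M)` for the objective `F`, whence existence
and uniqueness of the minimizer.
-/

open Matrix BigOperators MeasureTheory

noncomputable def singVals {m n : ℕ} (S : Matrix (Fin m) (Fin n) ℝ) : Fin n → ℝ :=
  fun i => Real.sqrt (((Matrix.isHermitian_iff_isSymm.mpr (by unfold Matrix.IsSymm; rw [Matrix.transpose_mul, Matrix.transpose_transpose]) : (Sᵀ * S).IsHermitian)).eigenvalues i)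

noncomputable def opNorm {m n : ℕ} (S : Matrix (Fin m) (Fin n) ℝ) : ℝ := ⨆ i, singVals S i

noncomputable def sMin {m n : ℕ} (S : Matrix (Fin m) (Fin n) ℝ) : ℝ := ⨅ i, singVals S i

noncomputable def nuclearNorm {m n : ℕ} (S : Matrix (Fin m) (Fin n) ℝ) : ℝ := ∑ i, singVals S i

noncomputable def frob {m n : ℕ} (S : Matrix (Fin m) (Fin n) ℝ) : ℝ :=
  Real.sqrt (∑ i, ∑ j, (S i j) ^ 2)

open scoped RealInnerProductSpace

theorem Matrix.isHermitian_transpose_mul_self {m n : Type*} [Fintype m] (A : Matrix m n ℝ) :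
    (Aᵀ * A).IsHermitian := by
  simpa only [conjTranspose_eq_transpose_of_trivial] using isHermitian_conjTranspose_mul_self A

theorem Matrix.trace_eq_sum_inner {𝕜 ι : Type*} [RCLike 𝕜] [Fintype ι] [DecidableEq ι]
    (A : Matrix ι ι 𝕜) (b : OrthonormalBasis ι 𝕜 (EuclideanSpace 𝕜 ι)) :
    A.trace = ∑ i, inner 𝕜 (b i) (toEuclideanLin A (b i)) := by
  rw [← LinearMap.trace_eq_sum_inner, toEuclideanLin_eq_toLin_orthonormal, trace_toLin_eq]

theorem Matrix.inner_toEuclideanLin_transpose_mul {l m n : Type*} [Fintype l] [Fintype m]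
    [Fintype n] [DecidableEq m] [DecidableEq n] (A : Matrix l m ℝ) (B : Matrix l n ℝ)
    (x : EuclideanSpace ℝ n) (y : EuclideanSpace ℝ m) :
    ⟪y, toEuclideanLin (Aᵀ * B) x⟫ = ⟪toEuclideanLin A y, toEuclideanLin B x⟫ := by
  classical
  rw [← conjTranspose_eq_transpose_of_trivial, toEuclideanLin_eq_toLin_orthonormal,
    toLin_mul _ (EuclideanSpace.basisFun l ℝ).toBasis, ← toEuclideanLin_eq_toLin_orthonormal,
    ← toEuclideanLin_eq_toLin_orthonormal, toEuclideanLin_conjTranspose_eq_adjoint,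
    LinearMap.comp_apply, LinearMap.adjoint_inner_right]

theorem Matrix.mul_diagonal_mul_transpose_transpose_mul {m n k : Type*} [Fintype m] [Fintype k]
    [DecidableEq k] {U : Matrix m k ℝ} (hU : Uᵀ * U = 1) (V : Matrix n k ℝ) (a b : k → ℝ) :
    (U * diagonal a * Vᵀ)ᵀ * (U * diagonal b * Vᵀ) = V * diagonal (a * b) * Vᵀ := by
  simp only [transpose_mul, transpose_transpose, diagonal_transpose, Matrix.mul_assoc]
  rw [← Matrix.mul_assoc Uᵀ, hU, Matrix.one_mul, ← Matrix.mul_assoc (diagonal a),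
    diagonal_mul_diagonal, Pi.mul_def]

theorem Matrix.trace_mul_diagonal_mul_transpose {n k : Type*} [Fintype n] [Fintype k]
    [DecidableEq k] {V : Matrix n k ℝ} (hV : Vᵀ * V = 1) (a : k → ℝ) :
    trace (V * diagonal a * Vᵀ) = ∑ i, a i := by
  rw [trace_mul_cycle, hV, Matrix.one_mul, trace_diagonal]

theorem frob_sq {m n : ℕ} (S : Matrix (Fin m) (Fin n) ℝ) : frob S ^ 2 = trace (Sᵀ * S) := by
  rw [frob, Real.sq_sqrt (by positivity), trace, Finset.sum_comm]
  simp only [diag_apply, mul_apply, transpose_apply, sq]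

theorem frob_sub_sq {m n : ℕ} (A B : Matrix (Fin m) (Fin n) ℝ) :
    frob (A - B) ^ 2 = frob A ^ 2 - 2 * trace (Aᵀ * B) + frob B ^ 2 := by
  have hBA : trace (Bᵀ * A) = trace (Aᵀ * B) := by
    rw [← trace_transpose, transpose_mul, transpose_transpose]
  rw [frob_sq, frob_sq, frob_sq, transpose_sub, Matrix.sub_mul, Matrix.mul_sub, Matrix.mul_sub,
    trace_sub, trace_sub, trace_sub, hBA]
  ring

theorem frob_sq_eq_zero_iff {m n : ℕ} {S : Matrix (Fin m) (Fin n) ℝ} : frob S ^ 2 = 0 ↔ S = 0 := by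
  rw [frob_sq, ← conjTranspose_eq_transpose_of_trivial, trace_conjTranspose_mul_self_eq_zero_iff]

section NuclearNorm

open scoped MatrixOrder

theorem Matrix.IsHermitian.trace_cfc {𝕜 n : Type*} [RCLike 𝕜] [Fintype n] [DecidableEq n]
    {A : Matrix n n 𝕜} (hA : A.IsHermitian) (f : ℝ → ℝ) :
    trace (cfc f A) = ∑ i, (f (hA.eigenvalues i) : 𝕜) := by
  rw [hA.cfc_eq, IsHermitian.cfc, Unitary.conjStarAlgAut_apply, trace_mul_cycle,
    Unitary.coe_star_mul_self, one_mul, trace_diagonal]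
  rfl

theorem nuclearNorm_nonneg {m n : ℕ} (S : Matrix (Fin m) (Fin n) ℝ) : 0 ≤ nuclearNorm S :=
  Finset.sum_nonneg fun _ _ ↦ Real.sqrt_nonneg _

theorem nuclearNorm_eq_trace_sqrt {m n : ℕ} (S : Matrix (Fin m) (Fin n) ℝ) :
    nuclearNorm S = trace (CFC.sqrt (Sᵀ * S)) := by
  have hS : 0 ≤ Sᵀ * S := by
    simpa only [nonneg_iff_posSemidef, conjTranspose_eq_transpose_of_trivial]
      using posSemidef_conjTranspose_mul_self S
  rw [CFC.sqrt_eq_real_sqrt _ hS, cfcₙ_eq_cfc, (isHermitian_transpose_mul_self S).trace_cfc]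
  rfl

theorem nuclearNorm_mul_diagonal_mul_transpose {m n k : ℕ} {U : Matrix (Fin m) (Fin k) ℝ}
    {V : Matrix (Fin n) (Fin k) ℝ} (hU : Uᵀ * U = 1) (hV : Vᵀ * V = 1) {a : Fin k → ℝ}
    (ha : 0 ≤ a) : nuclearNorm (U * diagonal a * Vᵀ) = ∑ i, a i := by
  have hC : 0 ≤ V * diagonal a * Vᵀ := by
    rw [nonneg_iff_posSemidef, ← conjTranspose_eq_transpose_of_trivial]
    exact (posSemidef_diagonal_iff.mpr ha).mul_mul_conjTranspose_same V
  have hC_symm : (V * diagonal a * Vᵀ)ᵀ = V * diagonal a * Vᵀ := by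
    simp [Matrix.mul_assoc]
  have hsq : (V * diagonal a * Vᵀ) * (V * diagonal a * Vᵀ)
      = (U * diagonal a * Vᵀ)ᵀ * (U * diagonal a * Vᵀ) := by
    nth_rewrite 1 [← hC_symm]
    rw [mul_diagonal_mul_transpose_transpose_mul hU, mul_diagonal_mul_transpose_transpose_mul hV]
  rw [nuclearNorm_eq_trace_sqrt, CFC.sqrt_unique hsq hC, trace_mul_diagonal_mul_transpose hV]

end NuclearNorm

section OperatorNorm

open scoped Matrix.Norms.L2Operator

theorem Matrix.l2_opNorm_le_one_of_transpose_mul_self_eq_one {m n : Type*} [Fintype m]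
    [Fintype n] [DecidableEq n] {U : Matrix m n ℝ} (hU : Uᵀ * U = 1) : ‖U‖ ≤ 1 := by
  have h := l2_opNorm_conjTranspose_mul_self U
  rw [conjTranspose_eq_transpose_of_trivial, hU, ← diagonal_one, l2_opNorm_diagonal] at h
  have h1 : ‖fun _ : n ↦ (1 : ℝ)‖ ≤ 1 := (pi_norm_const_le 1).trans_eq norm_one
  nlinarith [norm_nonneg U]

theorem Matrix.l2_opNorm_mul_diagonal_mul_transpose_le {m n k : Type*} [Fintype m] [Fintype n]
    [Fintype k] [DecidableEq n] [DecidableEq k] {U : Matrix m k ℝ} {V : Matrix n k ℝ}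
    (hU : Uᵀ * U = 1) (hV : Vᵀ * V = 1) (a : k → ℝ) : ‖U * diagonal a * Vᵀ‖ ≤ ‖a‖ :=
  calc ‖U * diagonal a * Vᵀ‖ ≤ ‖U‖ * ‖diagonal a‖ * ‖Vᵀ‖ :=
        (l2_opNorm_mul _ _).trans (by gcongr; exact l2_opNorm_mul _ _)
    _ ≤ 1 * ‖a‖ * 1 := by
        rw [l2_opNorm_diagonal, ← conjTranspose_eq_transpose_of_trivial, l2_opNorm_conjTranspose]
        gcongr
        exacts [l2_opNorm_le_one_of_transpose_mul_self_eq_one hU,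
          l2_opNorm_le_one_of_transpose_mul_self_eq_one hV]
    _ = ‖a‖ := by ring

theorem norm_toEuclideanLin_eigenvectorBasis {m n : ℕ} (M : Matrix (Fin m) (Fin n) ℝ)
    (j : Fin n) :
    ‖toEuclideanLin M ((isHermitian_transpose_mul_self M).eigenvectorBasis j)‖ = singVals M j := by
  set H := isHermitian_transpose_mul_self M
  have heig : toEuclideanLin (Mᵀ * M) (H.eigenvectorBasis j)
      = H.eigenvalues j • H.eigenvectorBasis j := by
    ext1
    simp [H.mulVec_eigenvectorBasis j]
  have h := inner_toEuclideanLin_transpose_mul M M (H.eigenvectorBasis j) (H.eigenvectorBasis j)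
  rw [heig, inner_smul_right, real_inner_self_eq_norm_sq, real_inner_self_eq_norm_sq,
    H.eigenvectorBasis.orthonormal.1 j, one_pow, mul_one] at h
  rw [singVals, ← Real.sqrt_sq (norm_nonneg _), ← h]

theorem trace_transpose_mul_le_l2_opNorm_mul_nuclearNorm {m n : ℕ}
    (M Z : Matrix (Fin m) (Fin n) ℝ) : trace (Mᵀ * Z) ≤ ‖Z‖ * nuclearNorm M := by
  set b := (isHermitian_transpose_mul_self M).eigenvectorBasis
  rw [trace_eq_sum_inner _ b, nuclearNorm, Finset.mul_sum]
  gcongr with j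
  have hZb : ‖toEuclideanLin Z (b j)‖ ≤ ‖Z‖ := by
    have h : ‖toEuclideanLin Z (b j)‖ ≤ ‖Z‖ * ‖b j‖ := Z.l2_opNorm_mulVec (b j)
    rwa [b.orthonormal.1 j, mul_one] at h
  calc ⟪b j, toEuclideanLin (Mᵀ * Z) (b j)⟫
      = ⟪toEuclideanLin M (b j), toEuclideanLin Z (b j)⟫ :=
        inner_toEuclideanLin_transpose_mul M Z (b j) (b j)
    _ ≤ ‖toEuclideanLin M (b j)‖ * ‖toEuclideanLin Z (b j)‖ := real_inner_le_norm _ _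
    _ ≤ singVals M j * ‖Z‖ := by
        rw [norm_toEuclideanLin_eigenvectorBasis]
        gcongr
        exact Real.sqrt_nonneg _
    _ = ‖Z‖ * singVals M j := mul_comm _ _

noncomputable def proxObjective {m n : ℕ} (c : ℝ) (T M : Matrix (Fin m) (Fin n) ℝ) : ℝ :=
  (1 / 2) * frob (M - T) ^ 2 + c * nuclearNorm M

theorem proxObjective_add_le {m n : ℕ} {c : ℝ} {T X Z : Matrix (Fin m) (Fin n) ℝ}
    (hT : T = X + Z) (hZ : ‖Z‖ ≤ c) (hXZ : trace (Xᵀ * Z) = c * nuclearNorm X)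
    (M : Matrix (Fin m) (Fin n) ℝ) :
    proxObjective c T X + (1 / 2) * frob (M - X) ^ 2 ≤ proxObjective c T M := by
  have hMZ : trace (Mᵀ * Z) ≤ c * nuclearNorm M :=
    (trace_transpose_mul_le_l2_opNorm_mul_nuclearNorm M Z).trans
      (mul_le_mul_of_nonneg_right hZ (nuclearNorm_nonneg M))
  have hM : frob (M - T) ^ 2 = frob (M - X) ^ 2 - 2 * trace ((M - X)ᵀ * Z) + frob Z ^ 2 := by
    rw [← frob_sub_sq, hT, sub_add_eq_sub_sub]
  have hX : frob (X - T) ^ 2 = frob Z ^ 2 := by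
    rw [hT, sub_add_cancel_left, frob_sq, frob_sq, transpose_neg, Matrix.neg_mul, Matrix.mul_neg,
      neg_neg]
  rw [transpose_sub, Matrix.sub_mul, trace_sub, hXZ] at hM
  unfold proxObjective
  linarith

end OperatorNorm

/-- Singular value soft-thresholding solves the nuclear-norm proximal problem:
    𝒯_c(T) = U diag((σᵢ−c)₊) Vᵀ is the unique minimizer of
    (1/2)‖M−T‖_F² + c‖M‖_*. -/
theorem svt_prox {n D k : ℕ} (T : Matrix (Fin n) (Fin D) ℝ) (c : ℝ) (hc : 0 < c)
    (U : Matrix (Fin n) (Fin k) ℝ) (V : Matrix (Fin D) (Fin k) ℝ) (σ : Fin k → ℝ)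
    (hU : Uᵀ * U = 1) (hV : Vᵀ * V = 1) (hσ : ∀ i, 0 ≤ σ i)
    (hT : T = U * Matrix.diagonal σ * Vᵀ) :
    (∀ M : Matrix (Fin n) (Fin D) ℝ,
      (1 / 2) * frob (U * Matrix.diagonal (fun i => max (σ i - c) 0) * Vᵀ - T) ^ 2
          + c * nuclearNorm (U * Matrix.diagonal (fun i => max (σ i - c) 0) * Vᵀ)
        ≤ (1 / 2) * frob (M - T) ^ 2 + c * nuclearNorm M) ∧
    (∀ M : Matrix (Fin n) (Fin D) ℝ,
      (1 / 2) * frob (M - T) ^ 2 + c * nuclearNorm M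
          = (1 / 2) * frob (U * Matrix.diagonal (fun i => max (σ i - c) 0) * Vᵀ - T) ^ 2
            + c * nuclearNorm (U * Matrix.diagonal (fun i => max (σ i - c) 0) * Vᵀ)
        → M = U * Matrix.diagonal (fun i => max (σ i - c) 0) * Vᵀ) := by
  set g : Fin k → ℝ := fun i ↦ max (σ i - c) 0
  set s : Fin k → ℝ := fun i ↦ min (σ i) c
  have hg : 0 ≤ g := fun i ↦ le_max_right _ _
  have hs : ‖s‖ ≤ c := (pi_norm_le_iff_of_nonneg hc.le).mpr fun i ↦ by
    rw [Real.norm_eq_abs, abs_le]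
    exact ⟨by linarith [le_min (hσ i) hc.le], min_le_right _ _⟩
  have hT_split : T = U * diagonal g * Vᵀ + U * diagonal s * Vᵀ := by
    rw [hT, ← Matrix.add_mul, ← Matrix.mul_add, diagonal_add]
    congr 3 with i
    rcases le_total (σ i) c with h | h <;> simp [g, s, h]
  have hXZ : trace ((U * diagonal g * Vᵀ)ᵀ * (U * diagonal s * Vᵀ))
      = c * nuclearNorm (U * diagonal g * Vᵀ) := by
    rw [mul_diagonal_mul_transpose_transpose_mul hU, trace_mul_diagonal_mul_transpose hV,
      nuclearNorm_mul_diagonal_mul_transpose hU hV hg, Finset.mul_sum]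
    refine Finset.sum_congr rfl fun i _ ↦ ?_
    rcases le_total (σ i) c with h | h <;> simp [g, s, h, mul_comm]
  have key := proxObjective_add_le hT_split
    ((l2_opNorm_mul_diagonal_mul_transpose_le hU hV s).trans hs) hXZ
  unfold proxObjective at key
  refine ⟨fun M ↦ ?_, fun M hM ↦ ?_⟩
  · linarith [key M, sq_nonneg (frob (M - U * diagonal g * Vᵀ))]
  · have h := key M
    rw [← sub_eq_zero, ← frob_sq_eq_zero_iff]
    linarith [sq_nonneg (frob (M - U * diagonal g * Vᵀ))]
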